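/- arXiv:2008.02517 — 6 statements merged into one kernel-verified Lean document; each statement's English description precedes it below -/
import Mathlib

section
/- Let ρ₁, ρ₂ : (a,b) → ℝ be differentiable functions satisfying ρ₁' + ρ₁² ≤ ρ₂' + ρ₂² pointwise on (a,b). If ρ₁(t₀) ≥ ρ₂(t₀) for some t₀ ∈ (a,b), then ρ₁(t) ≥ ρ₂(t) for all t ∈ (a, t₀]. -/
/-! The difference `u = ρ₁ - ρ₂` satisfies the linear differential inequality
`u' + (ρ₁ + ρ₂) u ≤ 0`. Multiplying by the integrating factor `exp F`, with
`F' = ρ₁ + ρ₂`, makes `u · exp F` antitone, so its sign at `t₀` propagates to the left. -/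

open Set

theorem exists_hasDerivAt_of_continuousOn_Ioo {a b : ℝ} {f : ℝ → ℝ}
    (hf : ContinuousOn f (Ioo a b)) (hab : (Ioo a b).Nonempty) :
    ∃ F : ℝ → ℝ, ∀ s ∈ Ioo a b, HasDerivAt F (f s) s := by
  obtain ⟨c, hc⟩ := hab
  refine ⟨fun s => ∫ x in c..s, f x, fun s hs => ?_⟩
  have hint : IntervalIntegrable f MeasureTheory.volume c s :=
    (hf.mono (ordConnected_Ioo.uIcc_subset hc hs)).intervalIntegrable
  exact intervalIntegral.integral_hasDerivAt_right hint
    (hf.stronglyMeasurableAtFilter isOpen_Ioo s hs) (hf.continuousAt (isOpen_Ioo.mem_nhds hs))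

theorem antitoneOn_mul_exp_of_hasDerivAt_add_mul_nonpos {a b : ℝ} {u u' f F : ℝ → ℝ}
    (hu : ∀ s ∈ Ioo a b, HasDerivAt u (u' s) s) (hF : ∀ s ∈ Ioo a b, HasDerivAt F (f s) s)
    (hineq : ∀ s ∈ Ioo a b, u' s + f s * u s ≤ 0) :
    AntitoneOn (fun s => u s * Real.exp (F s)) (Ioo a b) := by
  have hderiv : ∀ s ∈ Ioo a b, HasDerivAt (fun s => u s * Real.exp (F s))
      ((u' s + f s * u s) * Real.exp (F s)) s := fun s hs =>
    ((hu s hs).mul (hF s hs).exp).congr_deriv (by ring)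
  refine antitoneOn_of_hasDerivWithinAt_nonpos
    (f' := fun s => (u' s + f s * u s) * Real.exp (F s)) (convex_Ioo a b)
    (fun s hs => (hderiv s hs).continuousAt.continuousWithinAt) ?_ ?_ <;> rw [interior_Ioo]
  · exact fun s hs => (hderiv s hs).hasDerivWithinAt
  · exact fun s hs => mul_nonpos_of_nonpos_of_nonneg (hineq s hs) (Real.exp_pos _).le

theorem nonneg_of_hasDerivAt_add_mul_nonpos {a b t₀ : ℝ} {u u' f : ℝ → ℝ}
    (hu : ∀ s ∈ Ioo a b, HasDerivAt u (u' s) s) (hf : ContinuousOn f (Ioo a b))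
    (hineq : ∀ s ∈ Ioo a b, u' s + f s * u s ≤ 0) (ht₀ : t₀ ∈ Ioo a b)
    (h₀ : 0 ≤ u t₀) : ∀ t ∈ Ioc a t₀, 0 ≤ u t := by
  intro t ht
  obtain ⟨F, hF⟩ := exists_hasDerivAt_of_continuousOn_Ioo hf ⟨t₀, ht₀⟩
  have hanti := antitoneOn_mul_exp_of_hasDerivAt_add_mul_nonpos hu hF hineq
  have hle : u t₀ * Real.exp (F t₀) ≤ u t * Real.exp (F t) :=
    hanti ⟨ht.1, ht.2.trans_lt ht₀.2⟩ ht₀ ht.2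
  exact nonneg_of_mul_nonneg_left ((mul_nonneg h₀ (Real.exp_pos _).le).trans hle)
    (Real.exp_pos _)

/-- Comparison lemma for Riccati inequalities: if `ρ₁' + ρ₁² ≤ ρ₂' + ρ₂²` on `(a,b)`
and `ρ₁ t₀ ≥ ρ₂ t₀` for some `t₀ ∈ (a,b)`, then `ρ₁ ≥ ρ₂` on `(a, t₀]`. -/
theorem riccati_comparison
    (a b : ℝ) (ρ₁ ρ₂ ρ₁' ρ₂' : ℝ → ℝ)
    (hρ₁ : ∀ t ∈ Set.Ioo a b, HasDerivAt ρ₁ (ρ₁' t) t)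
    (hρ₂ : ∀ t ∈ Set.Ioo a b, HasDerivAt ρ₂ (ρ₂' t) t)
    (hineq : ∀ t ∈ Set.Ioo a b, ρ₁' t + (ρ₁ t) ^ 2 ≤ ρ₂' t + (ρ₂ t) ^ 2)
    (t₀ : ℝ) (ht₀ : t₀ ∈ Set.Ioo a b) (h₀ : ρ₂ t₀ ≤ ρ₁ t₀) :
    ∀ t ∈ Set.Ioc a t₀, ρ₂ t ≤ ρ₁ t := by
  have hsum : ContinuousOn (fun s => ρ₁ s + ρ₂ s) (Ioo a b) := fun s hs =>
    ((hρ₁ s hs).continuousAt.add (hρ₂ s hs).continuousAt).continuousWithinAt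
  have hlinear : ∀ s ∈ Ioo a b,
      (ρ₁' s - ρ₂' s) + (ρ₁ s + ρ₂ s) * (ρ₁ s - ρ₂ s) ≤ 0 := fun s hs =>
    calc (ρ₁' s - ρ₂' s) + (ρ₁ s + ρ₂ s) * (ρ₁ s - ρ₂ s)
        = (ρ₁' s + ρ₁ s ^ 2) - (ρ₂' s + ρ₂ s ^ 2) := by ring
      _ ≤ 0 := sub_nonpos.2 (hineq s hs)
  intro t ht
  exact sub_nonneg.1 <| nonneg_of_hasDerivAt_add_mul_nonpos
    (fun s hs => (hρ₁ s hs).sub (hρ₂ s hs)) hsum hlinear ht₀ (sub_nonneg.2 h₀) t ht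
end

section
/- Let ρ : (0,b) → ℝ be differentiable with ρ'(t) + ρ(t)² ≤ -κ for all t ∈ (0,b), where κ ∈ ℝ. Then ρ(t) ≤ ct_κ(t) on (0,b), and moreover b ≤ π_κ. -/
/-!
Let `h = exp ∫ ρ`, so that `h > 0`, `h' = ρ h` and `h'' = (ρ' + ρ²) h ≤ -κ h`, and let `f = sn_κ`,
so that `f'' = -κ f`. Then `E = h' f - h f' = h (ρ f - f')` is nonincreasing as long as `f ≥ 0`.
If `ρ(t₀) f(t₀) > f'(t₀)` while `f > 0` on `(0, t₀)`, then `E ≥ E(t₀) > 0` on `(0, t₀]`, so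
`(h / f)' = E / f² ≥ c / t²` near `0` because `f(t) = O(t)`; as `1 / t²` is not integrable at `0`,
the positive function `h / f` would become negative. Hence `ρ sn_κ ≤ sn_κ'` wherever `sn_κ > 0`,
which is `ρ ≤ ct_κ`; and if `b > π_κ`, the same inequality at `π_κ` reads `0 ≤ -1`.
-/

open Set Filter Topology

noncomputable def ct (κ t : ℝ) : ℝ :=
  if 0 < κ then Real.sqrt κ * (Real.cos (Real.sqrt κ * t) / Real.sin (Real.sqrt κ * t))
  else if κ = 0 then 1 / t
  else Real.sqrt (-κ) * (Real.cosh (Real.sqrt (-κ) * t) / Real.sinh (Real.sqrt (-κ) * t))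

theorem exists_pos_hasDerivAt_eq_mul {a b c : ℝ} {ρ : ℝ → ℝ} (hρ : ContinuousOn ρ (Ioo a b))
    (hc : c ∈ Ioo a b) :
    ∃ h : ℝ → ℝ, (∀ t, 0 < h t) ∧ ∀ t ∈ Ioo a b, HasDerivAt h (ρ t * h t) t := by
  refine ⟨fun t => Real.exp (∫ s in c..t, ρ s), fun t => Real.exp_pos _, fun t ht => ?_⟩
  have hsub : uIcc c t ⊆ Ioo a b := (ordConnected_Ioo).uIcc_subset hc ht
  have hI : HasDerivAt (fun u => ∫ s in c..u, ρ s) (ρ t) t :=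
    intervalIntegral.integral_hasDerivAt_right ((hρ.mono hsub).intervalIntegrable)
      (hρ.stronglyMeasurableAtFilter isOpen_Ioo t ht) (hρ.continuousAt (isOpen_Ioo.mem_nhds ht))
  simpa only [mul_comm] using hI.exp

theorem exists_pos_le_mul_of_hasDerivAt {f f' : ℝ → ℝ} (hf : ∀ x, HasDerivAt f (f' x) x)
    (hf' : Continuous f') (hf0 : f 0 = 0) (T : ℝ) :
    ∃ C > 0, ∀ x ∈ Icc 0 T, f x ≤ C * x := by
  obtain ⟨C, hC⟩ := isCompact_Icc.exists_bound_of_continuousOn (hf'.continuousOn (s := Icc 0 T))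
  refine ⟨max C 1, by positivity, fun x hx => ?_⟩
  have := norm_image_sub_le_of_norm_deriv_le_segment' (fun x _ => (hf x).hasDerivWithinAt)
    (fun x hx => (hC x (Ico_subset_Icc_self hx)).trans (le_max_left C 1)) x hx
  rw [hf0, sub_zero, sub_zero] at this
  exact (le_abs_self _).trans this

theorem monotoneOn_add_div_of_div_sq_le_deriv {φ φ' : ℝ → ℝ} {k T : ℝ}
    (hφ : ∀ x ∈ Ioc 0 T, HasDerivAt φ (φ' x) x) (hle : ∀ x ∈ Ioc 0 T, k / x ^ 2 ≤ φ' x) :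
    MonotoneOn (fun x => φ x + k / x) (Ioc 0 T) := by
  have hderiv : ∀ x ∈ Ioc 0 T, HasDerivAt (fun x => φ x + k / x) (φ' x - k / x ^ 2) x :=
    fun x hx => ((hφ x hx).add ((hasDerivAt_const x k).div (hasDerivAt_id' x) hx.1.ne')).congr_deriv
      (by ring)
  refine monotoneOn_of_hasDerivWithinAt_nonneg (convex_Ioc 0 T)
    (fun x hx => (hderiv x hx).continuousAt.continuousWithinAt)
    (fun x hx => (hderiv x (interior_subset hx)).hasDerivWithinAt) fun x hx => ?_
  linarith [hle x (interior_subset hx)]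

theorem exists_nonpos_of_div_sq_le_deriv {φ φ' : ℝ → ℝ} {k T : ℝ} (hk : 0 < k) (hT : 0 < T)
    (hφ : ∀ x ∈ Ioc 0 T, HasDerivAt φ (φ' x) x) (hle : ∀ x ∈ Ioc 0 T, k / x ^ 2 ≤ φ' x) :
    ∃ x ∈ Ioc 0 T, φ x ≤ 0 := by
  have hmono := monotoneOn_add_div_of_div_sq_le_deriv hφ hle
  have hlarge : ∀ᶠ x in 𝓝[>] 0, φ T + k / T ≤ k / x := by
    simpa only [div_eq_mul_inv] using
      (tendsto_inv_nhdsGT_zero.const_mul_atTop hk).eventually_ge_atTop (φ T + k / T)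
  have hsmall : ∀ᶠ x in 𝓝[>] 0, x ∈ Ioc 0 T := Ioc_mem_nhdsGT hT
  obtain ⟨x, hx, hxk⟩ := (hsmall.and hlarge).exists
  exact ⟨x, hx, by linarith [hmono hx (right_mem_Ioc.2 hT) hx.2]⟩

theorem antitoneOn_mul_mul_sub_of_riccati {κ a T : ℝ} {ρ ρ' h f f' : ℝ → ℝ}
    (hρ : ∀ t ∈ Ioc a T, HasDerivAt ρ (ρ' t) t) (hineq : ∀ t ∈ Ioc a T, ρ' t + ρ t ^ 2 ≤ -κ)
    (hh : ∀ t ∈ Ioc a T, HasDerivAt h (ρ t * h t) t) (hh_nonneg : ∀ t ∈ Ioo a T, 0 ≤ h t)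
    (hf : ∀ t ∈ Ioc a T, HasDerivAt f (f' t) t) (hf' : ∀ t ∈ Ioc a T, HasDerivAt f' (-κ * f t) t)
    (hf_nonneg : ∀ t ∈ Ioo a T, 0 ≤ f t) :
    AntitoneOn (fun t => h t * (ρ t * f t - f' t)) (Ioc a T) := by
  have hderiv : ∀ t ∈ Ioc a T, HasDerivAt (fun t => h t * (ρ t * f t - f' t))
      (h t * f t * (ρ' t + ρ t ^ 2 + κ)) t := fun t ht =>
    ((hh t ht).mul (((hρ t ht).mul (hf t ht)).sub (hf' t ht))).congr_deriv
      (by simp only [Pi.sub_apply, Pi.mul_apply]; ring)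
  refine antitoneOn_of_hasDerivWithinAt_nonpos (convex_Ioc a T)
    (fun t ht => (hderiv t ht).continuousAt.continuousWithinAt)
    (fun t ht => (hderiv t (interior_subset ht)).hasDerivWithinAt) fun t ht => ?_
  rw [interior_Ioc] at ht
  exact mul_nonpos_of_nonneg_of_nonpos (mul_nonneg (hh_nonneg t ht) (hf_nonneg t ht))
    (by linarith [hineq t (Ioo_subset_Ioc_self ht)])

theorem mul_le_deriv_of_riccati_le {κ b t₀ : ℝ} {ρ ρ' f f' : ℝ → ℝ}
    (hρ : ∀ t ∈ Ioo 0 b, HasDerivAt ρ (ρ' t) t) (hineq : ∀ t ∈ Ioo 0 b, ρ' t + ρ t ^ 2 ≤ -κ)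
    (hf : ∀ t, HasDerivAt f (f' t) t) (hf' : ∀ t, HasDerivAt f' (-κ * f t) t) (hf0 : f 0 = 0)
    (ht₀ : t₀ ∈ Ioo 0 b) (hf_pos : ∀ t ∈ Ioo 0 t₀, 0 < f t) :
    ρ t₀ * f t₀ ≤ f' t₀ := by
  obtain ⟨h, hh_pos, hh⟩ := exists_pos_hasDerivAt_eq_mul
    (fun t ht => (hρ t ht).continuousAt.continuousWithinAt) ht₀
  have hsub : Ioc 0 t₀ ⊆ Ioo 0 b := Ioc_subset_Ioo_right ht₀.2
  set E := fun t => h t * (ρ t * f t - f' t)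
  have hE_anti : AntitoneOn E (Ioc 0 t₀) :=
    antitoneOn_mul_mul_sub_of_riccati (fun t ht => hρ t (hsub ht)) (fun t ht => hineq t (hsub ht))
      (fun t ht => hh t (hsub ht)) (fun t _ => (hh_pos t).le) (fun t _ => hf t) (fun t _ => hf' t)
      (fun t ht => (hf_pos t ht).le)
  by_contra! hcontra
  have hE_pos : 0 < E t₀ := mul_pos (hh_pos t₀) (by linarith)
  obtain ⟨C, hC, hfC⟩ := exists_pos_le_mul_of_hasDerivAt hf
    (continuous_iff_continuousAt.2 fun t => (hf' t).continuousAt) hf0 t₀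
  have hT : Ioc 0 (t₀ / 2) ⊆ Ioo 0 t₀ := Ioc_subset_Ioo_right (half_lt_self ht₀.1)
  obtain ⟨t, ht, hφt⟩ := exists_nonpos_of_div_sq_le_deriv (φ := fun t => h t / f t)
    (φ' := fun t => E t / f t ^ 2) (k := E t₀ / C ^ 2) (div_pos hE_pos (by positivity))
    (half_pos ht₀.1)
    (fun t ht => ((hh t (hsub (Ioo_subset_Ioc_self (hT ht)))).div (hf t)
      (hf_pos t (hT ht)).ne').congr_deriv (by ring))
    (fun t ht => by
      have ht' := Ioo_subset_Ioc_self (hT ht)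
      have hft := hf_pos t (hT ht)
      have hEt : E t₀ ≤ E t := hE_anti ht' (right_mem_Ioc.2 ht₀.1) ht'.2
      rw [div_div, ← mul_pow]
      exact div_le_div₀ (hE_pos.le.trans hEt) hEt (by positivity)
        (pow_le_pow_left₀ hft.le (hfC t (Ioc_subset_Icc_self ht')) 2))
  exact hφt.not_gt (div_pos (hh_pos t) (hf_pos t (hT ht)))

noncomputable def sn (κ t : ℝ) : ℝ :=
  if 0 < κ then Real.sin (Real.sqrt κ * t) / Real.sqrt κ
  else if κ = 0 then t
  else Real.sinh (Real.sqrt (-κ) * t) / Real.sqrt (-κ)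

noncomputable def cs (κ t : ℝ) : ℝ :=
  if 0 < κ then Real.cos (Real.sqrt κ * t)
  else if κ = 0 then 1
  else Real.cosh (Real.sqrt (-κ) * t)

theorem hasDerivAt_sn (κ t : ℝ) : HasDerivAt (sn κ) (cs κ t) t := by
  rcases lt_trichotomy κ 0 with hκ | rfl | hκ
  · have ha : 0 < Real.sqrt (-κ) := Real.sqrt_pos.2 (neg_pos.2 hκ)
    have hsn : sn κ = fun t => Real.sinh (Real.sqrt (-κ) * t) / Real.sqrt (-κ) :=
      funext fun _ => by simp [sn, hκ.not_gt, hκ.ne]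
    rw [hsn, cs, if_neg hκ.not_gt, if_neg hκ.ne]
    exact (((hasDerivAt_id t).const_mul _).sinh.div_const _).congr_deriv (by field_simp; simp)
  · have hsn : sn 0 = id := funext fun _ => by simp [sn]
    simpa [hsn, cs] using hasDerivAt_id t
  · have ha : 0 < Real.sqrt κ := Real.sqrt_pos.2 hκ
    have hsn : sn κ = fun t => Real.sin (Real.sqrt κ * t) / Real.sqrt κ :=
      funext fun _ => if_pos hκ
    rw [hsn, cs, if_pos hκ]
    exact (((hasDerivAt_id t).const_mul _).sin.div_const _).congr_deriv (by field_simp; simp)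

theorem hasDerivAt_cs (κ t : ℝ) : HasDerivAt (cs κ) (-κ * sn κ t) t := by
  rcases lt_trichotomy κ 0 with hκ | rfl | hκ
  · have ha : 0 < Real.sqrt (-κ) := Real.sqrt_pos.2 (neg_pos.2 hκ)
    have hcs : cs κ = fun t => Real.cosh (Real.sqrt (-κ) * t) :=
      funext fun _ => by simp [cs, hκ.not_gt, hκ.ne]
    rw [hcs, sn, if_neg hκ.not_gt, if_neg hκ.ne]
    refine ((hasDerivAt_id t).const_mul _).cosh.congr_deriv ?_
    field_simp
    simp [Real.sq_sqrt (neg_nonneg.2 hκ.le)]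
  · have hcs : cs 0 = fun _ => 1 := funext fun _ => by simp [cs]
    simpa [hcs] using hasDerivAt_const t (1 : ℝ)
  · have ha : 0 < Real.sqrt κ := Real.sqrt_pos.2 hκ
    have hcs : cs κ = fun t => Real.cos (Real.sqrt κ * t) := funext fun _ => if_pos hκ
    rw [hcs, sn, if_pos hκ]
    refine ((hasDerivAt_id t).const_mul _).cos.congr_deriv ?_
    field_simp
    simp [Real.sq_sqrt hκ.le]

theorem sn_zero (κ : ℝ) : sn κ 0 = 0 := by
  simp [sn]

theorem ct_eq_cs_div_sn (κ t : ℝ) : ct κ t = cs κ t / sn κ t := by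
  simp only [ct, cs, sn]
  split_ifs <;> field_simp

theorem sn_pos {κ t : ℝ} (ht : 0 < t) (htπ : 0 < κ → t < Real.pi / Real.sqrt κ) :
    0 < sn κ t := by
  rcases lt_trichotomy κ 0 with hκ | rfl | hκ
  · have hs : 0 < Real.sqrt (-κ) := Real.sqrt_pos.2 (neg_pos.2 hκ)
    simp only [sn, hκ.not_gt, hκ.ne, if_false]
    exact div_pos (Real.sinh_pos_iff.2 (mul_pos hs ht)) hs
  · simpa [sn] using ht
  · have hs : 0 < Real.sqrt κ := Real.sqrt_pos.2 hκ
    simp only [sn, hκ, if_true]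
    refine div_pos (Real.sin_pos_of_pos_of_lt_pi (mul_pos hs ht) ?_) hs
    rw [← lt_div_iff₀' hs]
    exact htπ hκ

theorem sn_pi_div_sqrt {κ : ℝ} (hκ : 0 < κ) : sn κ (Real.pi / Real.sqrt κ) = 0 := by
  have hs : Real.sqrt κ ≠ 0 := (Real.sqrt_pos.2 hκ).ne'
  simp [sn, hκ, mul_div_cancel₀ _ hs]

theorem cs_pi_div_sqrt {κ : ℝ} (hκ : 0 < κ) : cs κ (Real.pi / Real.sqrt κ) = -1 := by
  have hs : Real.sqrt κ ≠ 0 := (Real.sqrt_pos.2 hκ).ne'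
  simp [cs, hκ, mul_div_cancel₀ _ hs]

theorem riccati_comparison_estimate_upper_general
    (κ b : ℝ) (ρ ρ' : ℝ → ℝ)
    (hρ : ∀ t ∈ Set.Ioo (0 : ℝ) b, HasDerivAt ρ (ρ' t) t)
    (hineq : ∀ t ∈ Set.Ioo (0 : ℝ) b, ρ' t + (ρ t) ^ 2 ≤ -κ) :
    (∀ t ∈ Set.Ioo (0 : ℝ) b, ρ t ≤ ct κ t) ∧
      (0 < κ → b ≤ Real.pi / Real.sqrt κ) := by
  have hcomp : ∀ t ∈ Ioo 0 b, (∀ s ∈ Ioo 0 t, 0 < sn κ s) → ρ t * sn κ t ≤ cs κ t :=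
    fun t ht hpos => mul_le_deriv_of_riccati_le hρ hineq (hasDerivAt_sn κ) (hasDerivAt_cs κ)
      (sn_zero κ) ht hpos
  have hπ : 0 < κ → b ≤ Real.pi / Real.sqrt κ := by
    intro hκ
    by_contra! hb
    have h := hcomp _ ⟨by positivity, hb⟩ fun s hs => sn_pos hs.1 fun _ => hs.2
    rw [sn_pi_div_sqrt hκ, cs_pi_div_sqrt hκ, mul_zero] at h
    norm_num at h
  refine ⟨fun t ht => ?_, hπ⟩
  have hsn : ∀ s ∈ Ioc 0 t, 0 < sn κ s :=
    fun s hs => sn_pos hs.1 fun hκ => hs.2.trans_lt (ht.2.trans_le (hπ hκ))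
  rw [ct_eq_cs_div_sn, le_div_iff₀ (hsn t (right_mem_Ioc.2 ht.1))]
  exact hcomp t ht fun s hs => hsn s (Ioo_subset_Ioc_self hs)

/-- Riccati comparison estimate, part 1: if `ρ' + ρ² ≤ -κ` on `(0,b)` then
`ρ ≤ ct_κ` on `(0,b)`, and furthermore `b ≤ π_κ`. -/
theorem riccati_comparison_estimate_upper
    (κ b : ℝ) (hb : 0 < b) (ρ ρ' : ℝ → ℝ)
    (hρ : ∀ t ∈ Set.Ioo (0 : ℝ) b, HasDerivAt ρ (ρ' t) t)
    (hineq : ∀ t ∈ Set.Ioo (0 : ℝ) b, ρ' t + (ρ t) ^ 2 ≤ -κ) :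
    (∀ t ∈ Set.Ioo (0 : ℝ) b, ρ t ≤ ct κ t) ∧
      (0 < κ → b ≤ Real.pi / Real.sqrt κ) :=
  riccati_comparison_estimate_upper_general κ b ρ ρ' hρ hineq
end

section
/- Let ρ : (0,b) → ℝ be differentiable with ρ'(t) + ρ(t)² ≥ -κ for all t ∈ (0,b) and lim_{t→0⁺} ρ(t) = ∞. Then ct_κ(t) ≤ ρ(t) for all t ∈ (0, min{b, π_κ}). -/
open Set Filter Topology Real

theorem hasDerivAt_mul_cos_div_sin {a s : ℝ} (hs : sin (a * s) ≠ 0) :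
    HasDerivAt (fun t => a * (cos (a * t) / sin (a * t)))
      (-a ^ 2 - (a * (cos (a * s) / sin (a * s))) ^ 2) s := by
  have hlin := (hasDerivAt_id' s).const_mul a
  refine ((hlin.cos.div hlin.sin hs).const_mul a).congr_deriv ?_
  field_simp

theorem hasDerivAt_mul_cosh_div_sinh {a s : ℝ} (hs : sinh (a * s) ≠ 0) :
    HasDerivAt (fun t => a * (cosh (a * t) / sinh (a * t)))
      (a ^ 2 - (a * (cosh (a * s) / sinh (a * s))) ^ 2) s := by
  have hlin := (hasDerivAt_id' s).const_mul a
  refine ((hlin.cosh.div hlin.sinh hs).const_mul a).congr_deriv ?_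
  field_simp

theorem ct_hasDerivAt {κ s : ℝ} (hs : 0 < s) (hπ : 0 < κ → s < π / √κ) :
    HasDerivAt (ct κ) (-κ - ct κ s ^ 2) s := by
  rcases lt_trichotomy 0 κ with hκ | rfl | hκ
  · have hsqrt : 0 < √κ := sqrt_pos.mpr hκ
    have hsin : sin (√κ * s) ≠ 0 := (sin_pos_of_pos_of_lt_pi (by positivity)
      (by rw [← lt_div_iff₀' hsqrt]; exact hπ hκ)).ne'
    have hct : ct κ = fun t => √κ * (cos (√κ * t) / sin (√κ * t)) := by
      funext t; simp [ct, hκ]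
    simpa [hct, sq_sqrt hκ.le] using hasDerivAt_mul_cos_div_sin hsin
  · have hct : ct 0 = fun t => t⁻¹ := by
      funext t; simp [ct]
    simpa [hct] using hasDerivAt_inv hs.ne'
  · have hsinh : sinh (√(-κ) * s) ≠ 0 :=
      (sinh_pos_iff.mpr (mul_pos (sqrt_pos.mpr (neg_pos.mpr hκ)) hs)).ne'
    have hct : ct κ = fun t => √(-κ) * (cosh (√(-κ) * t) / sinh (√(-κ) * t)) := by
      funext t; simp [ct, hκ.not_gt, hκ.ne]
    simpa [hct, sq_sqrt (neg_nonneg.mpr hκ.le), sub_eq_add_neg] using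
      hasDerivAt_mul_cosh_div_sinh hsinh

theorem nonpos_of_hasDerivWithinAt_le_mul_of_pos {u u' : ℝ → ℝ} {a c K : ℝ}
    (hu : ContinuousOn u (Icc a c)) (hu' : ∀ x ∈ Ico a c, HasDerivWithinAt u (u' x) (Ici x) x)
    (hbound : ∀ x ∈ Ico a c, 0 < u x → u' x ≤ K * u x) (ha : u a ≤ 0) :
    ∀ x ∈ Icc a c, u x ≤ 0 := by
  intro x hx
  -- `u` can never catch up with the barrier `δ e^{(|K|+1) t}`, which grows strictly faster
  have hfence : ∀ δ > 0, u x ≤ δ * exp ((|K| + 1) * x) := by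
    intro δ hδ
    have hB : ∀ t, HasDerivAt (fun t => δ * exp ((|K| + 1) * t))
        (δ * exp ((|K| + 1) * t) * (|K| + 1)) t := fun t => by
      simpa [mul_assoc, mul_comm, mul_left_comm] using
        (((hasDerivAt_id' t).const_mul (|K| + 1)).exp).const_mul δ
    refine image_le_of_deriv_right_lt_deriv_boundary hu hu' (ha.trans (by positivity)) hB
      (fun t ht hut => ?_) hx
    have hpos : 0 < u t := hut ▸ by positivity
    calc u' t ≤ K * u t := hbound t ht hpos
      _ < (|K| + 1) * u t := by gcongr; linarith [le_abs_self K]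
      _ = _ := by rw [hut]; ring
  have hlim : Tendsto (fun δ => δ * exp ((|K| + 1) * x)) (𝓝[>] 0) (𝓝 0) := by
    simpa using (tendsto_id.mul_const _).mono_left (nhdsWithin_le_nhds (a := (0 : ℝ)))
  exact ge_of_tendsto hlim (eventually_nhdsWithin_of_forall hfence)

theorem riccati_comparison_s2 {κ a c : ℝ} {ρ ρ' ψ ψ' : ℝ → ℝ}
    (hρ : ∀ t ∈ Icc a c, HasDerivAt ρ (ρ' t) t) (hψ : ∀ t ∈ Icc a c, HasDerivAt ψ (ψ' t) t)
    (hsuper : ∀ t ∈ Ico a c, -κ ≤ ρ' t + ρ t ^ 2) (hsub : ∀ t ∈ Ico a c, ψ' t + ψ t ^ 2 ≤ -κ)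
    (ha : ψ a ≤ ρ a) : ∀ t ∈ Icc a c, ψ t ≤ ρ t := by
  obtain ⟨K, hK⟩ := isCompact_Icc.exists_bound_of_continuousOn (f := fun t => ρ t + ψ t)
    fun t ht => ((hρ t ht).continuousAt.add (hψ t ht).continuousAt).continuousWithinAt
  have hbound : ∀ t ∈ Ico a c, 0 < ψ t - ρ t → ψ' t - ρ' t ≤ K * (ψ t - ρ t) := by
    intro t ht hpos
    calc ψ' t - ρ' t ≤ -(ρ t + ψ t) * (ψ t - ρ t) := by
          linarith [hsuper t ht, hsub t ht]
      _ ≤ K * (ψ t - ρ t) := by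
          gcongr
          exact (neg_le_abs _).trans (hK t (Ico_subset_Icc_self ht))
  have hderiv : ∀ t ∈ Icc a c, HasDerivAt (fun t => ψ t - ρ t) (ψ' t - ρ' t) t :=
    fun t ht => (hψ t ht).sub (hρ t ht)
  intro t ht
  refine sub_nonpos.mp (nonpos_of_hasDerivWithinAt_le_mul_of_pos ?_ ?_ hbound
    (sub_nonpos.mpr ha) t ht)
  · exact fun t ht => (hderiv t ht).continuousAt.continuousWithinAt
  · exact fun t ht => (hderiv t (Ico_subset_Icc_self ht)).hasDerivWithinAt

theorem riccati_le_of_tendsto_atTop {κ T : ℝ} {ρ ρ' ψ ψ' : ℝ → ℝ} (hT : 0 < T)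
    (hρ : ∀ t ∈ Ioc 0 T, HasDerivAt ρ (ρ' t) t)
    (hsuper : ∀ t ∈ Ioc 0 T, -κ ≤ ρ' t + ρ t ^ 2) (hlim : Tendsto ρ (𝓝[>] 0) atTop)
    (hψ : ∀ t ∈ Icc 0 T, HasDerivAt ψ (ψ' t) t)
    (hsub : ∀ t ∈ Ioc 0 T, ψ' t + ψ t ^ 2 ≤ -κ) :
    ψ T ≤ ρ T := by
  have hψ_near : ∀ᶠ t in 𝓝[>] 0, ψ t < ψ 0 + 1 := nhdsWithin_le_nhds <|
    (hψ 0 ⟨le_rfl, hT.le⟩).continuousAt.eventually_lt_const (lt_add_one _)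
  obtain ⟨t₀, ⟨hψt₀, hρt₀⟩, ht₀⟩ :=
    ((hψ_near.and (hlim.eventually_ge_atTop _)).and (Ioo_mem_nhdsGT hT)).exists
  have hsubset : Icc t₀ T ⊆ Ioc 0 T := Icc_subset_Ioc_iff ht₀.2.le |>.mpr ⟨ht₀.1, le_rfl⟩
  have hsubset' : Ico t₀ T ⊆ Ioc 0 T := Ico_subset_Icc_self.trans hsubset
  exact riccati_comparison_s2 (fun t ht => hρ t (hsubset ht))
    (fun t ht => hψ t (Ioc_subset_Icc_self (hsubset ht))) (fun t ht => hsuper t (hsubset' ht))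
    (fun t ht => hsub t (hsubset' ht)) (hψt₀.le.trans hρt₀) T ⟨ht₀.2.le, le_rfl⟩

theorem riccati_comparison_estimate_lower_general
    (κ b : ℝ) (ρ ρ' : ℝ → ℝ)
    (hρ : ∀ t ∈ Set.Ioo (0 : ℝ) b, HasDerivAt ρ (ρ' t) t)
    (hineq : ∀ t ∈ Set.Ioo (0 : ℝ) b, -κ ≤ ρ' t + (ρ t) ^ 2)
    (hlim : Filter.Tendsto ρ (nhdsWithin 0 (Set.Ioi 0)) Filter.atTop) :
    ∀ t, 0 < t → t < b → (0 < κ → t < Real.pi / Real.sqrt κ) → ct κ t ≤ ρ t := by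
  intro T hT hTb hTπ
  have hshift : Tendsto (T + ·) (𝓝[>] 0) (𝓝 T) :=
    ((continuous_const_add T).tendsto' 0 T (add_zero T)).mono_left nhdsWithin_le_nhds
  have hdom : ∀ᶠ ε in 𝓝[>] 0, 0 < κ → T + ε < π / √κ := by
    by_cases hκ : 0 < κ
    · exact (hshift.eventually_lt_const (hTπ hκ)).mono fun _ h _ => h
    · exact .of_forall fun _ h => absurd h hκ
  have hshifted : ∀ᶠ ε in 𝓝[>] 0, ct κ (T + ε) ≤ ρ T := by
    filter_upwards [hdom, self_mem_nhdsWithin] with ε hε (hε₀ : 0 < ε)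
    have hψ : ∀ t ∈ Icc 0 T, HasDerivAt (fun t => ct κ (t + ε)) (-κ - ct κ (t + ε) ^ 2) t :=
      fun t ht => (ct_hasDerivAt (by linarith [ht.1])
        fun hκ => by linarith [hε hκ, ht.2]).comp_add_const t ε
    have hIoc : Ioc 0 T ⊆ Ioo 0 b := fun t ht => ⟨ht.1, ht.2.trans_lt hTb⟩
    simpa [add_comm] using riccati_le_of_tendsto_atTop hT (fun t ht => hρ t (hIoc ht))
      (fun t ht => hineq t (hIoc ht)) hlim hψ (fun t _ => by linarith)
  exact le_of_tendsto ((ct_hasDerivAt hT hTπ).continuousAt.tendsto.comp hshift) hshifted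

/-- Riccati comparison estimate, part 2: if `ρ' + ρ² ≥ -κ` on `(0,b)` and
`ρ(t) → ∞` as `t → 0⁺`, then `ct_κ ≤ ρ` on `(0, min {b, π_κ})`. -/
theorem riccati_comparison_estimate_lower
    (κ b : ℝ) (hb : 0 < b) (ρ ρ' : ℝ → ℝ)
    (hρ : ∀ t ∈ Set.Ioo (0 : ℝ) b, HasDerivAt ρ (ρ' t) t)
    (hineq : ∀ t ∈ Set.Ioo (0 : ℝ) b, -κ ≤ ρ' t + (ρ t) ^ 2)
    (hlim : Filter.Tendsto ρ (nhdsWithin 0 (Set.Ioi 0)) Filter.atTop) :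
    ∀ t, 0 < t → t < b → (0 < κ → t < Real.pi / Real.sqrt κ) → ct κ t ≤ ρ t :=
  riccati_comparison_estimate_lower_general κ b ρ ρ' hρ hineq hlim
end

section
/- For any two skew-symmetric real n×n matrices X and Y, the Frobenius norm of the commutator satisfies ‖XY - YX‖_F ≤ ‖X‖_F ‖Y‖_F. -/
/-!
Put `A = i X` and `B = i Y`: both are Hermitian and antisymmetric, and `[A, B] = -[X, Y]`.
Conjugating by a unitary `U` diagonalising `A`, with eigenvalues `d` and `c = U⋆ B U`,
`‖[A, B]‖² = ∑ (d j - d k)² ‖c j k‖²`, `‖A‖² = ∑ d m²` and `‖B‖² = ∑ ‖c j k‖²`; so it suffices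
that `(d j - d k)² ≤ ∑ d m²` whenever `c j k ≠ 0`.

Since `conj A = -A`, complex conjugation maps eigenvectors for `λ` to eigenvectors for `-λ`, so
the eigenvalues come in pairs `±λ`. If `d k ≠ ±d j`, the four eigenvalues `±d j, ±d k` give
`2 d j² + 2 d k² ≥ (d j - d k)²`. If `d k = -d j ≠ 0` we need `4 d j²`, i.e. `d j` and `d k`
multiple eigenvalues; when `d j` is simple, the eigenvector for `d k` is a multiple of the
conjugate `v̄` of the one for `d j`, so `c j k` is a multiple of `v̄ᵀ B v̄`, which vanishes as
`Bᵀ = -B`.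
-/

noncomputable def frobNorm {n : ℕ} (M : Matrix (Fin n) (Fin n) ℝ) : ℝ :=
  Real.sqrt (∑ i, ∑ j, (M i j) ^ 2)

open Matrix

attribute [local instance] Matrix.frobeniusNormedAddCommGroup Matrix.frobeniusNormedSpace

section SymmetricSpectrum

variable {ι : Type*} [Fintype ι] {d : ι → ℝ}

lemma sq_add_sq_add_sq_add_sq_le_sum_sq {i₁ i₂ i₃ i₄ : ι} (h₁₂ : i₁ ≠ i₂) (h₃₄ : i₃ ≠ i₄)
    (h₁₃ : d i₁ ≠ d i₃) (h₁₄ : d i₁ ≠ d i₄) (h₂₃ : d i₂ ≠ d i₃) (h₂₄ : d i₂ ≠ d i₄) :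
    d i₁ ^ 2 + d i₂ ^ 2 + d i₃ ^ 2 + d i₄ ^ 2 ≤ ∑ m, d m ^ 2 := by
  classical
  have h := Finset.sum_le_univ_sum_of_nonneg (s := {i₁, i₂, i₃, i₄}) (fun m => sq_nonneg (d m))
  rwa [Finset.sum_insert (by simp [h₁₂, ne_of_apply_ne d h₁₃, ne_of_apply_ne d h₁₄]),
    Finset.sum_insert (by simp [ne_of_apply_ne d h₂₃, ne_of_apply_ne d h₂₄]),
    Finset.sum_pair h₃₄, ← add_assoc, ← add_assoc] at h

lemma sq_sub_le_sum_sq (hneg : ∀ j, ∃ m, d m = -d j) {j k : ι}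
    (hopp : d k = -d j → d j ≠ 0 → (∃ j', j' ≠ j ∧ d j' = d j) ∧ ∃ k', k' ≠ k ∧ d k' = d k) :
    (d j - d k) ^ 2 ≤ ∑ m, d m ^ 2 := by
  have hle (i : ι) : d i ^ 2 ≤ ∑ m, d m ^ 2 :=
    Finset.single_le_sum (fun m _ => sq_nonneg (d m)) (Finset.mem_univ i)
  by_cases hj : d j = 0
  · simpa [hj] using hle k
  by_cases hk : d k = 0
  · simpa [hk] using hle j
  by_cases hkj : d k = d j
  · rw [hkj, sub_self, sq, zero_mul]
    positivity
  by_cases hopp' : d k = -d j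
  · obtain ⟨⟨j', hj'j, hj'⟩, k', hk'k, hk'⟩ := hopp hopp' hj
    have h4 := sq_add_sq_add_sq_add_sq_le_sum_sq hj'j.symm hk'k.symm (Ne.symm hkj)
      (by rwa [hk', ne_comm]) (by rwa [hj', ne_comm]) (by rwa [hj', hk', ne_comm])
    rw [hj', hk', hopp'] at h4
    rw [hopp']
    linarith
  · obtain ⟨j', hj'⟩ := hneg j
    obtain ⟨k', hk'⟩ := hneg k
    have h4 := sq_add_sq_add_sq_add_sq_le_sum_sq (d := d) (i₁ := j) (i₂ := j') (i₃ := k) (i₄ := k')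
      (ne_of_apply_ne d (by rw [hj']; intro h; exact hj (by linarith)))
      (ne_of_apply_ne d (by rw [hk']; intro h; exact hk (by linarith)))
      (Ne.symm hkj) (by rw [hk']; intro h; exact hopp' (by linarith))
      (by rw [hj']; intro h; exact hopp' (by linarith))
      (by rw [hj', hk']; intro h; exact hkj (by linarith))
    rw [hj', hk'] at h4
    nlinarith [sq_nonneg (d j + d k)]

lemma sum_sq_sub_mul_le {w : ι → ι → ℝ} (hw : ∀ j k, 0 ≤ w j k)
    (hd : ∀ j k, w j k ≠ 0 → (d j - d k) ^ 2 ≤ ∑ m, d m ^ 2) :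
    ∑ j, ∑ k, (d j - d k) ^ 2 * w j k ≤ (∑ m, d m ^ 2) * ∑ j, ∑ k, w j k := by
  simp_rw [Finset.mul_sum]
  refine Finset.sum_le_sum fun j _ => Finset.sum_le_sum fun k _ => ?_
  by_cases h : w j k = 0
  · simp [h]
  · exact mul_le_mul_of_nonneg_right (hd j k h) (hw j k)

end SymmetricSpectrum

section Frobenius

variable {m n : Type*} [Fintype m] [Fintype n]

lemma frobenius_norm_sq {α : Type*} [NormedAddCommGroup α] (M : Matrix m n α) :
    ‖M‖ ^ 2 = ∑ i, ∑ j, ‖M i j‖ ^ 2 := by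
  rw [frobenius_norm_def, ← Real.sqrt_eq_rpow, Real.sq_sqrt (by positivity)]
  simp_rw [Real.rpow_two]

variable {𝕜 : Type*} [RCLike 𝕜]

lemma ofReal_frobenius_norm_sq (M : Matrix m n 𝕜) : ((‖M‖ ^ 2 : ℝ) : 𝕜) = (Mᴴ * M).trace := by
  simp [frobenius_norm_sq, trace, mul_apply, RCLike.conj_mul]
  exact Finset.sum_comm

lemma frobenius_norm_unitary_mul [DecidableEq m] {U : Matrix m m 𝕜} (hU : U ∈ unitaryGroup m 𝕜)
    (M : Matrix m n 𝕜) : ‖U * M‖ = ‖M‖ := by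
  have h : ‖U * M‖ ^ 2 = ‖M‖ ^ 2 := by
    apply RCLike.ofReal_injective (K := 𝕜)
    rw [ofReal_frobenius_norm_sq, ofReal_frobenius_norm_sq, conjTranspose_mul, Matrix.mul_assoc,
      ← Matrix.mul_assoc Uᴴ, ← star_eq_conjTranspose U, mem_unitaryGroup_iff'.mp hU, Matrix.one_mul]
  exact (pow_left_inj₀ (norm_nonneg _) (norm_nonneg _) two_ne_zero).mp h

lemma frobenius_norm_mul_unitary [DecidableEq n] (M : Matrix m n 𝕜) {U : Matrix n n 𝕜}
    (hU : U ∈ unitaryGroup n 𝕜) : ‖M * U‖ = ‖M‖ := by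
  rw [← frobenius_norm_conjTranspose, conjTranspose_mul, ← star_eq_conjTranspose,
    frobenius_norm_unitary_mul (Unitary.star_mem hU), frobenius_norm_conjTranspose]

lemma frobenius_norm_sq_diagonal [DecidableEq n] (d : n → ℝ) :
    ‖diagonal (RCLike.ofReal ∘ d : n → 𝕜)‖ ^ 2 = ∑ i, d i ^ 2 := by
  rw [frobenius_norm_diagonal, EuclideanSpace.norm_sq_eq]
  simp

lemma frobenius_norm_sq_diagonal_mul_sub_mul_diagonal [DecidableEq n] (d : n → ℝ)
    (c : Matrix n n 𝕜) :
    ‖diagonal (RCLike.ofReal ∘ d) * c - c * diagonal (RCLike.ofReal ∘ d)‖ ^ 2 =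
      ∑ j, ∑ k, (d j - d k) ^ 2 * ‖c j k‖ ^ 2 := by
  rw [frobenius_norm_sq]
  refine Finset.sum_congr rfl fun j _ => Finset.sum_congr rfl fun k _ => ?_
  rw [Matrix.sub_apply, diagonal_mul, mul_diagonal, mul_comm (c j k), ← sub_mul, norm_mul, mul_pow,
    Function.comp_apply, Function.comp_apply, ← RCLike.ofReal_sub, RCLike.norm_ofReal, sq_abs]

end Frobenius

lemma apply_self_eq_zero_of_transpose_eq_neg {n R : Type*} [AddGroup R] [IsAddTorsionFree R]
    {M : Matrix n n R} (hM : Mᵀ = -M) (i : n) : M i i = 0 :=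
  self_eq_neg.mp (by simpa using congrFun₂ hM i i)

namespace Matrix.IsHermitian

variable {n : Type*} {A : Matrix n n ℂ} (hA : A.IsHermitian)
include hA

lemma map_conj_eq_neg (hAt : Aᵀ = -A) : A.map (starRingEnd ℂ) = -A := by
  ext i j
  exact (hA.apply j i).trans (congrFun₂ hAt i j)

variable [Fintype n] [DecidableEq n]

lemma mul_eigenvectorUnitary :
    A * (hA.eigenvectorUnitary : Matrix n n ℂ) =
      (hA.eigenvectorUnitary : Matrix n n ℂ) * diagonal (RCLike.ofReal ∘ hA.eigenvalues) := by
  have h := hA.spectral_theorem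
  rw [Unitary.conjStarAlgAut_apply] at h
  calc _ = _ * diagonal (RCLike.ofReal ∘ hA.eigenvalues) * star _ * _ := by rw [← h]
    _ = _ := by rw [Matrix.mul_assoc, Unitary.coe_star_mul_self, Matrix.mul_one]

lemma star_eigenvectorUnitary_mul :
    star (hA.eigenvectorUnitary : Matrix n n ℂ) * A =
      diagonal (RCLike.ofReal ∘ hA.eigenvalues) * star (hA.eigenvectorUnitary : Matrix n n ℂ) := by
  have h := hA.spectral_theorem
  rw [Unitary.conjStarAlgAut_apply] at h
  calc _ = star _ * (_ * diagonal (RCLike.ofReal ∘ hA.eigenvalues) * star _) := by rw [← h]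
    _ = _ := by
      rw [← Matrix.mul_assoc, ← Matrix.mul_assoc, Unitary.coe_star_mul_self, Matrix.one_mul]

lemma eigenvalues_eq_neg_of_star_mul_map_conj_apply_ne_zero (hAt : Aᵀ = -A) {m k : n}
    (h : (star (hA.eigenvectorUnitary : Matrix n n ℂ) *
      (hA.eigenvectorUnitary : Matrix n n ℂ).map (starRingEnd ℂ)) m k ≠ 0) :
    hA.eigenvalues m = -hA.eigenvalues k := by
  set U : Matrix n n ℂ := ↑hA.eigenvectorUnitary
  set D : Matrix n n ℂ := diagonal (RCLike.ofReal ∘ hA.eigenvalues)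
  have hD : D.map (starRingEnd ℂ) = D := by
    simp [D, diagonal_map]
  have hAU : A * U.map (starRingEnd ℂ) = -(U.map (starRingEnd ℂ) * D) := by
    have h := congrArg (Matrix.map · (starRingEnd ℂ)) (hA.mul_eigenvectorUnitary : A * U = U * D)
    rw [Matrix.map_mul, Matrix.map_mul, hA.map_conj_eq_neg hAt, hD, Matrix.neg_mul] at h
    rw [← h, neg_neg]
  have hDT : D * (star U * U.map (starRingEnd ℂ)) = -(star U * U.map (starRingEnd ℂ) * D) := by
    rw [← Matrix.mul_assoc, ← hA.star_eigenvectorUnitary_mul, Matrix.mul_assoc, hAU,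
      Matrix.mul_neg, Matrix.mul_assoc]
  have hmk := congrFun₂ hDT m k
  simp only [D, diagonal_mul, mul_diagonal, neg_apply, Function.comp_apply] at hmk
  have : ((hA.eigenvalues m + hA.eigenvalues k : ℝ) : ℂ) = 0 :=
    (mul_eq_zero.mp (by push_cast; linear_combination hmk)).resolve_right h
  exact eq_neg_of_add_eq_zero_left (by exact_mod_cast this)

lemma exists_eigenvalues_eq_neg (hAt : Aᵀ = -A) (k : n) :
    ∃ m, hA.eigenvalues m = -hA.eigenvalues k := by
  set U : Matrix n n ℂ := ↑hA.eigenvectorUnitary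
  have hV : U.map (starRingEnd ℂ) = U * (star U * U.map (starRingEnd ℂ)) := by
    rw [← Matrix.mul_assoc, mem_unitaryGroup_iff.mp hA.eigenvectorUnitary.2, Matrix.one_mul]
  by_contra! h
  have hT (m : n) : (star U * U.map (starRingEnd ℂ)) m k = 0 :=
    by_contra fun hm => h m (hA.eigenvalues_eq_neg_of_star_mul_map_conj_apply_ne_zero hAt hm)
  have hcol (a : n) : U a k = 0 := by
    have hak := congrFun₂ hV a k
    rw [map_apply, mul_apply, Finset.sum_eq_zero fun m _ => by rw [hT m, mul_zero]] at hak
    exact (map_eq_zero _).mp hak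
  have hkk : (star U * U) k k = (1 : Matrix n n ℂ) k k :=
    congrFun₂ (mem_unitaryGroup_iff'.mp hA.eigenvectorUnitary.2) k k
  simp only [mul_apply, star_apply, hcol, star_zero, zero_mul, Finset.sum_const_zero,
    one_apply_eq] at hkk
  exact zero_ne_one hkk

lemma exists_ne_eigenvalues_eq_of_star_mul_mul_apply_ne_zero (hAt : Aᵀ = -A) {B : Matrix n n ℂ}
    (hBt : Bᵀ = -B) {j k : n}
    (hjk : (star (hA.eigenvectorUnitary : Matrix n n ℂ) * B * hA.eigenvectorUnitary) j k ≠ 0)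
    (hkj : hA.eigenvalues k = -hA.eigenvalues j) :
    ∃ j', j' ≠ j ∧ hA.eigenvalues j' = hA.eigenvalues j := by
  set U : Matrix n n ℂ := ↑hA.eigenvectorUnitary
  set V : Matrix n n ℂ := U.map (starRingEnd ℂ)
  set T : Matrix n n ℂ := star U * V
  by_contra! h
  have hcol (m : n) (hm : m ≠ j) : T m k = 0 := by_contra fun hmk => h m hm <| by
    rw [hA.eigenvalues_eq_neg_of_star_mul_map_conj_apply_ne_zero hAt hmk, hkj, neg_neg]
  have hV : V = U * T := by
    rw [← Matrix.mul_assoc, mem_unitaryGroup_iff.mp hA.eigenvectorUnitary.2, Matrix.one_mul]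
  have hU : U = V * T.map (starRingEnd ℂ) := by
    calc U = V.map (starRingEnd ℂ) := by ext; simp [V]
      _ = V * T.map (starRingEnd ℂ) := by conv_lhs => rw [hV, Matrix.map_mul]
  have hstar : star U = Vᵀ := by ext; simp [V]
  have hW : (Vᵀ * B * V)ᵀ = -(Vᵀ * B * V) := by
    rw [transpose_mul, transpose_mul, transpose_transpose, hBt, Matrix.neg_mul, Matrix.mul_neg,
      Matrix.mul_assoc]
  apply hjk
  calc (star U * B * U) j k = (Vᵀ * B * V * T.map (starRingEnd ℂ)) j k := by
        rw [hstar, Matrix.mul_assoc (Vᵀ * B), ← hU]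
    _ = (Vᵀ * B * V) j j * T.map (starRingEnd ℂ) j k :=
        Finset.sum_eq_single j (fun m _ hm => by simp [hcol m hm]) (by simp)
    _ = 0 := by rw [apply_self_eq_zero_of_transpose_eq_neg hW, zero_mul]

theorem frobenius_norm_commutator_le (hAt : Aᵀ = -A) {B : Matrix n n ℂ} (hB : B.IsHermitian)
    (hBt : Bᵀ = -B) : ‖A * B - B * A‖ ≤ ‖A‖ * ‖B‖ := by
  set U : Matrix n n ℂ := ↑hA.eigenvectorUnitary
  set d := hA.eigenvalues
  set D : Matrix n n ℂ := diagonal (RCLike.ofReal ∘ d)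
  set c := star U * B * U
  have hU : U ∈ unitaryGroup n ℂ := hA.eigenvectorUnitary.2
  have hconj (M : Matrix n n ℂ) : ‖star U * M * U‖ = ‖M‖ := by
    rw [frobenius_norm_mul_unitary _ hU, frobenius_norm_unitary_mul (Unitary.star_mem hU)]
  have hAU : A * U = U * D := hA.mul_eigenvectorUnitary
  have hUA : star U * A = D * star U := hA.star_eigenvectorUnitary_mul
  have hUAU : star U * A * U = D := by
    rw [hUA, Matrix.mul_assoc, mem_unitaryGroup_iff'.mp hU, Matrix.mul_one]
  have hUABU : star U * (A * B - B * A) * U = D * c - c * D := by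
    simp only [Matrix.mul_sub, Matrix.sub_mul, ← Matrix.mul_assoc, hUA]
    rw [Matrix.mul_assoc (star U * B) A U, hAU]
    simp only [c, Matrix.mul_assoc]
  have hc : c.IsHermitian := by
    have h := isHermitian_conjTranspose_mul_mul U hB
    rwa [← star_eq_conjTranspose] at h
  have hbound (j k : n) (hne : ‖c j k‖ ^ 2 ≠ 0) : (d j - d k) ^ 2 ≤ ∑ m, d m ^ 2 := by
    have hjk : c j k ≠ 0 := by simpa using hne
    have hkj : c k j ≠ 0 := by rw [← hc.apply]; exact star_ne_zero.mpr hjk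
    have hdjk (hdkj : d k = -d j) : d j = -d k := by rw [hdkj, neg_neg]
    exact sq_sub_le_sum_sq (hA.exists_eigenvalues_eq_neg hAt) fun hdkj _ =>
      ⟨hA.exists_ne_eigenvalues_eq_of_star_mul_mul_apply_ne_zero hAt hBt hjk hdkj,
        hA.exists_ne_eigenvalues_eq_of_star_mul_mul_apply_ne_zero hAt hBt hkj (hdjk hdkj)⟩
  have hBc : ‖B‖ = ‖c‖ := (hconj B).symm
  rw [← hconj (A * B - B * A), hUABU, ← hconj A, hUAU, hBc,
    ← pow_le_pow_iff_left₀ (norm_nonneg _) (by positivity) two_ne_zero, mul_pow,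
    frobenius_norm_sq_diagonal_mul_sub_mul_diagonal, frobenius_norm_sq_diagonal,
    frobenius_norm_sq c]
  exact sum_sq_sub_mul_le (fun _ _ => by positivity) hbound

end Matrix.IsHermitian

section Complexification

variable {n : Type*} {X : Matrix n n ℝ}

lemma isHermitian_I_smul_map_ofReal (hX : Xᵀ = -X) :
    (Complex.I • X.map Complex.ofReal).IsHermitian := by
  ext i j
  have hji : X j i = -X i j := congrFun₂ hX i j
  simp [hji]

lemma transpose_I_smul_map_ofReal (hX : Xᵀ = -X) :
    (Complex.I • X.map Complex.ofReal)ᵀ = -(Complex.I • X.map Complex.ofReal) := by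
  rw [transpose_smul, ← transpose_map, hX, Matrix.map_neg _ Complex.ofReal_neg, smul_neg]

lemma norm_I_smul_map_ofReal {m : Type*} [Fintype m] [Fintype n] (M : Matrix m n ℝ) :
    ‖Complex.I • M.map Complex.ofReal‖ = ‖M‖ := by
  rw [norm_smul, Complex.norm_I, one_mul, frobenius_norm_map_eq _ _ Complex.norm_real]

lemma I_smul_map_ofReal_commutator [Fintype n] (X Y : Matrix n n ℝ) :
    Complex.I • X.map Complex.ofReal * (Complex.I • Y.map Complex.ofReal) -
        Complex.I • Y.map Complex.ofReal * (Complex.I • X.map Complex.ofReal) =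
      -(X * Y - Y * X).map Complex.ofReal := by
  have hmul (M N : Matrix n n ℝ) :
      (M * N).map Complex.ofReal = M.map Complex.ofReal * N.map Complex.ofReal :=
    Matrix.map_mul (f := Complex.ofRealHom)
  rw [smul_mul_smul_comm, smul_mul_smul_comm, Complex.I_mul_I, Matrix.map_sub _ Complex.ofReal_sub,
    hmul, hmul, neg_one_smul, neg_one_smul, neg_sub, neg_sub_neg]

end Complexification

lemma frobNorm_eq_norm {n : ℕ} (M : Matrix (Fin n) (Fin n) ℝ) : frobNorm M = ‖M‖ := by
  rw [frobNorm, ← Real.sqrt_sq (norm_nonneg M), frobenius_norm_sq]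
  simp [Real.norm_eq_abs, sq_abs]

/-- For skew-symmetric matrices, `‖XY - YX‖_F ≤ ‖X‖_F ‖Y‖_F`. -/
theorem commutator_skew_bound {n : ℕ} (X Y : Matrix (Fin n) (Fin n) ℝ)
    (hX : X.transpose = -X) (hY : Y.transpose = -Y) :
    frobNorm (X * Y - Y * X) ≤ frobNorm X * frobNorm Y := by
  have h := (isHermitian_I_smul_map_ofReal hX).frobenius_norm_commutator_le
    (transpose_I_smul_map_ofReal hX) (isHermitian_I_smul_map_ofReal hY)
    (transpose_I_smul_map_ofReal hY)
  rwa [I_smul_map_ofReal_commutator, norm_neg, frobenius_norm_map_eq _ _ Complex.norm_real,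
    norm_I_smul_map_ofReal, norm_I_smul_map_ofReal, ← frobNorm_eq_norm, ← frobNorm_eq_norm,
    ← frobNorm_eq_norm] at h
end

section
/- Let δ ≤ 0 ≤ Δ, κ ∈ [δ, Δ], and let ρ solve ρ'' + δρ = η with ρ(0) = ρ'(0) = 0, where η : [0,r] → ℝ is continuous and nonnegative. If x : [0,r] → ℝ solves x'' + κx = y with x(0) = x'(0) = 0 and |y(t)| ≤ η(t), then |x(t)| ≤ ρ(t) for all t ∈ [0, min{r, π_{(Δ+δ)/2}}]. -/
/-!
For fixed `t` and a solution of `u'' + κu = f` with `u(0) = u'(0) = 0`, Duhamel's quantity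
`W(s) = sn_κ(t - s) u'(s) + cs_κ(t - s) u(s)` runs from `0` at `s = 0` to `u(t)` at `s = t`, with
derivative `sn_κ(t - s) f(s)`. Because `δ ≤ min 0 κ`, we have `|cs_κ| ≤ cs_δ`, hence
`|sn_κ| ≤ sn_δ` on `[0, ∞)`; so the derivative of `W` for `x` is dominated by the one for `ρ`, and
integrating over `[0, t]` gives `|x(t)| ≤ ρ(t)`.
-/

open Real Set

/-- The functions `sn_κ` and `cs_κ = sn_κ'` of comparison geometry: `sn_κ` solves
`f'' + κ f = 0`, `f(0) = 0`, `f'(0) = 1`. -/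
noncomputable def generalizedSin (κ τ : ℝ) : ℝ :=
  if 0 < κ then sin (√κ * τ) / √κ
  else if κ = 0 then τ
  else sinh (√(-κ) * τ) / √(-κ)

noncomputable def generalizedCos (κ τ : ℝ) : ℝ :=
  if 0 < κ then cos (√κ * τ)
  else if κ = 0 then 1
  else cosh (√(-κ) * τ)

@[simp]
lemma generalizedSin_zero (κ : ℝ) : generalizedSin κ 0 = 0 := by
  unfold generalizedSin
  split_ifs <;> simp

@[simp]
lemma generalizedCos_zero (κ : ℝ) : generalizedCos κ 0 = 1 := by
  unfold generalizedCos
  split_ifs <;> simp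

lemma hasDerivAt_generalizedSin (κ τ : ℝ) :
    HasDerivAt (generalizedSin κ) (generalizedCos κ τ) τ := by
  rcases lt_trichotomy 0 κ with hκ | rfl | hκ
  · have e : generalizedSin κ = fun τ => sin (√κ * τ) / √κ := funext fun _ => if_pos hκ
    rw [e, generalizedCos, if_pos hκ]
    refine ((((hasDerivAt_id τ).const_mul √κ).sin).div_const √κ).congr_deriv ?_
    simp [(sqrt_pos.2 hκ).ne']
  · have e : generalizedSin 0 = id := funext fun _ => by simp [generalizedSin]
    simpa [e, generalizedCos] using hasDerivAt_id τ
  · have e : generalizedSin κ = fun τ => sinh (√(-κ) * τ) / √(-κ) :=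
      funext fun _ => by simp [generalizedSin, hκ.not_gt, hκ.ne]
    rw [e, generalizedCos, if_neg hκ.not_gt, if_neg hκ.ne]
    refine ((((hasDerivAt_id τ).const_mul √(-κ)).sinh).div_const √(-κ)).congr_deriv ?_
    simp [(sqrt_pos.2 (neg_pos.2 hκ)).ne']

lemma hasDerivAt_generalizedCos (κ τ : ℝ) :
    HasDerivAt (generalizedCos κ) (-κ * generalizedSin κ τ) τ := by
  rcases lt_trichotomy 0 κ with hκ | rfl | hκ
  · have e : generalizedCos κ = fun τ => cos (√κ * τ) := funext fun _ => if_pos hκ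
    rw [e, generalizedSin, if_pos hκ]
    refine (((hasDerivAt_id τ).const_mul √κ).cos).congr_deriv ?_
    have := (sqrt_pos.2 hκ).ne'
    simp only [id, mul_one]
    field_simp
    rw [sq_sqrt hκ.le]
    ring
  · have e : generalizedCos 0 = fun _ => 1 := funext fun _ => by simp [generalizedCos]
    simpa [e] using hasDerivAt_const τ (1 : ℝ)
  · have e : generalizedCos κ = fun τ => cosh (√(-κ) * τ) :=
      funext fun _ => by simp [generalizedCos, hκ.not_gt, hκ.ne]
    rw [e, generalizedSin, if_neg hκ.not_gt, if_neg hκ.ne]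
    refine (((hasDerivAt_id τ).const_mul √(-κ)).cosh).congr_deriv ?_
    have := (sqrt_pos.2 (neg_pos.2 hκ)).ne'
    simp only [id, mul_one]
    field_simp
    rw [sq_sqrt (neg_nonneg.2 hκ.le)]
    ring

lemma abs_generalizedCos_le {δ κ : ℝ} (hδ : δ ≤ 0) (hδκ : δ ≤ κ) (τ : ℝ) :
    |generalizedCos κ τ| ≤ generalizedCos δ τ := by
  have one_le : 1 ≤ generalizedCos δ τ := by
    rcases hδ.lt_or_eq with hδ | rfl
    · simp [generalizedCos, hδ.not_gt, hδ.ne, one_le_cosh]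
    · simp [generalizedCos]
  rcases lt_trichotomy 0 κ with hκ | rfl | hκ
  · simpa [generalizedCos, hκ] using (abs_cos_le_one _).trans one_le
  · simpa [generalizedCos] using one_le
  · have hδ' : δ < 0 := hδκ.trans_lt hκ
    simp only [generalizedCos, hκ.not_gt, hκ.ne, hδ'.not_gt, hδ'.ne, if_false]
    rw [abs_of_pos (cosh_pos _), cosh_le_cosh, abs_mul, abs_mul]
    gcongr

lemma norm_sub_le_sub_of_norm_deriv_le {E : Type*} [NormedAddCommGroup E] [NormedSpace ℝ E]
    {f f' : ℝ → E} {g g' : ℝ → ℝ} {a b : ℝ} (hab : a ≤ b)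
    (hf : ∀ x ∈ Icc a b, HasDerivAt f (f' x) x) (hg : ∀ x ∈ Icc a b, HasDerivAt g (g' x) x)
    (bound : ∀ x ∈ Icc a b, ‖f' x‖ ≤ g' x) :
    ‖f b - f a‖ ≤ g b - g a :=
  image_norm_le_of_norm_deriv_right_le_deriv_boundary' (f := fun x => f x - f a)
    (B := fun x => g x - g a)
    (fun x hx => ((hf x hx).continuousAt.sub continuousAt_const).continuousWithinAt)
    (fun x hx => ((hf x (Ico_subset_Icc_self hx)).sub_const (f a)).hasDerivWithinAt)
    (by simp)
    (fun x hx => ((hg x hx).continuousAt.sub continuousAt_const).continuousWithinAt)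
    (fun x hx => ((hg x (Ico_subset_Icc_self hx)).sub_const (g a)).hasDerivWithinAt)
    (fun x hx => bound x (Ico_subset_Icc_self hx)) (right_mem_Icc.2 hab)

lemma abs_generalizedSin_le {δ κ τ : ℝ} (hδ : δ ≤ 0) (hδκ : δ ≤ κ) (hτ : 0 ≤ τ) :
    |generalizedSin κ τ| ≤ generalizedSin δ τ := by
  simpa using norm_sub_le_sub_of_norm_deriv_le hτ
    (fun x _ => hasDerivAt_generalizedSin κ x) (fun x _ => hasDerivAt_generalizedSin δ x)
    (fun x _ => abs_generalizedCos_le hδ hδκ x)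

noncomputable def duhamel (κ t : ℝ) (u u' : ℝ → ℝ) (s : ℝ) : ℝ :=
  generalizedSin κ (t - s) * u' s + generalizedCos κ (t - s) * u s

lemma hasDerivAt_duhamel {κ t s w : ℝ} {u u' : ℝ → ℝ}
    (hu : HasDerivAt u (u' s) s) (hu' : HasDerivAt u' w s) :
    HasDerivAt (duhamel κ t u u') (generalizedSin κ (t - s) * (w + κ * u s)) s := by
  have hsn := (hasDerivAt_generalizedSin κ (t - s)).comp s ((hasDerivAt_id s).const_sub t)
  have hcs := (hasDerivAt_generalizedCos κ (t - s)).comp s ((hasDerivAt_id s).const_sub t)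
  refine ((hsn.mul hu').add (hcs.mul hu)).congr_deriv ?_
  simp only [Function.comp_apply]
  ring

@[simp]
lemma duhamel_self (κ t : ℝ) (u u' : ℝ → ℝ) : duhamel κ t u u' t = u t := by
  simp [duhamel]

lemma duhamel_zero_of_initial {κ t : ℝ} {u u' : ℝ → ℝ} (hu : u 0 = 0) (hu' : u' 0 = 0) :
    duhamel κ t u u' 0 = 0 := by
  simp [duhamel, hu, hu']

theorem kaul_comparison_scalar_general
    (δ Δ κ r : ℝ) (hδ : δ ≤ 0)
    (hδκ : δ ≤ κ)
    (ρ ρ' ρ'' x x' x'' η y : ℝ → ℝ)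
    (hρ : ∀ t ∈ Set.Icc (0 : ℝ) r, HasDerivAt ρ (ρ' t) t)
    (hρ' : ∀ t ∈ Set.Icc (0 : ℝ) r, HasDerivAt ρ' (ρ'' t) t)
    (hρode : ∀ t ∈ Set.Icc (0 : ℝ) r, ρ'' t + δ * ρ t = η t)
    (hρ0 : ρ 0 = 0) (hρ0' : ρ' 0 = 0)
    (hx : ∀ t ∈ Set.Icc (0 : ℝ) r, HasDerivAt x (x' t) t)
    (hx' : ∀ t ∈ Set.Icc (0 : ℝ) r, HasDerivAt x' (x'' t) t)
    (hxode : ∀ t ∈ Set.Icc (0 : ℝ) r, x'' t + κ * x t = y t)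
    (hx0 : x 0 = 0) (hx0' : x' 0 = 0)
    (hy : ∀ t ∈ Set.Icc (0 : ℝ) r, |y t| ≤ η t) :
    ∀ t ∈ Set.Icc (0 : ℝ) r,
      (0 < (Δ + δ) / 2 → t ≤ Real.pi / Real.sqrt ((Δ + δ) / 2)) →
      |x t| ≤ ρ t := by
  intro t ht _
  have hsub : Icc 0 t ⊆ Icc 0 r := Icc_subset_Icc_right ht.2
  have bound : ∀ s ∈ Icc 0 t, ‖generalizedSin κ (t - s) * (x'' s + κ * x s)‖
      ≤ generalizedSin δ (t - s) * (ρ'' s + δ * ρ s) := by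
    intro s hs
    have hsn := abs_generalizedSin_le hδ hδκ (sub_nonneg.2 hs.2)
    rw [hxode s (hsub hs), hρode s (hsub hs), Real.norm_eq_abs, abs_mul]
    exact mul_le_mul hsn (hy s (hsub hs)) (abs_nonneg _) ((abs_nonneg _).trans hsn)
  simpa [duhamel_zero_of_initial hx0 hx0', duhamel_zero_of_initial hρ0 hρ0'] using
    norm_sub_le_sub_of_norm_deriv_le ht.1
      (fun s hs => hasDerivAt_duhamel (hx s (hsub hs)) (hx' s (hsub hs)))
      (fun s hs => hasDerivAt_duhamel (hρ s (hsub hs)) (hρ' s (hsub hs))) bound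

/-- Scalar version of Kaul's comparison: with `δ ≤ 0 ≤ Δ`, `κ ∈ [δ, Δ]`,
`ρ'' + δρ = η`, `ρ(0) = ρ'(0) = 0`, `η ≥ 0` continuous, and `x'' + κx = y`,
`x(0) = x'(0) = 0`, `|y| ≤ η`, we have `|x| ≤ ρ` on `[0, min {r, π_{(Δ+δ)/2}}]`. -/
theorem kaul_comparison_scalar
    (δ Δ κ r : ℝ) (hr : 0 ≤ r) (hδ : δ ≤ 0) (hΔ : 0 ≤ Δ)
    (hδκ : δ ≤ κ) (hκΔ : κ ≤ Δ)
    (ρ ρ' ρ'' x x' x'' η y : ℝ → ℝ)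
    (hηc : ContinuousOn η (Set.Icc 0 r))
    (hη0 : ∀ t ∈ Set.Icc (0 : ℝ) r, 0 ≤ η t)
    (hρ : ∀ t ∈ Set.Icc (0 : ℝ) r, HasDerivAt ρ (ρ' t) t)
    (hρ' : ∀ t ∈ Set.Icc (0 : ℝ) r, HasDerivAt ρ' (ρ'' t) t)
    (hρode : ∀ t ∈ Set.Icc (0 : ℝ) r, ρ'' t + δ * ρ t = η t)
    (hρ0 : ρ 0 = 0) (hρ0' : ρ' 0 = 0)
    (hx : ∀ t ∈ Set.Icc (0 : ℝ) r, HasDerivAt x (x' t) t)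
    (hx' : ∀ t ∈ Set.Icc (0 : ℝ) r, HasDerivAt x' (x'' t) t)
    (hxode : ∀ t ∈ Set.Icc (0 : ℝ) r, x'' t + κ * x t = y t)
    (hx0 : x 0 = 0) (hx0' : x' 0 = 0)
    (hy : ∀ t ∈ Set.Icc (0 : ℝ) r, |y t| ≤ η t) :
    ∀ t ∈ Set.Icc (0 : ℝ) r,
      (0 < (Δ + δ) / 2 → t ≤ Real.pi / Real.sqrt ((Δ + δ) / 2)) →
      |x t| ≤ ρ t :=
  kaul_comparison_scalar_general δ Δ κ r hδ hδκ ρ ρ' ρ'' x x' x'' η y hρ hρ' hρode hρ0 hρ0' hx hx'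
    hxode hx0 hx0' hy
end

section
/- Let f : ℝⁿ → ℝ be differentiable with L-Lipschitz gradient and bounded below by f*. Gradient descent with constant step size 1/L starting at x₀ produces, within at most ⌈2L(f(x₀) - f*)/ε²⌉ steps, an iterate xₜ with ‖∇f(xₜ)‖ < ε. -/
/-!
By the descent lemma, a gradient step of length `1/L` lowers `f` by at least
`‖∇f(xₖ)‖² / (2L)`. Summing over the first `N + 1` steps telescopes to
`∑_{k ≤ N} ‖∇f(xₖ)‖² ≤ 2L (f(x₀) - f*)`, so for `N = ⌈2L(f(x₀) - f*)/ε²⌉` the `N + 1`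
squared gradient norms cannot all be at least `ε²`.
-/

open Finset RealInnerProductSpace

theorem DifferentiableAt.hasDerivAt_comp_add_smul {E : Type*} [NormedAddCommGroup E]
    [InnerProductSpace ℝ E] [CompleteSpace E] {f : E → ℝ} {x v : E} {t : ℝ}
    (hf : DifferentiableAt ℝ f (x + t • v)) :
    HasDerivAt (fun s : ℝ => f (x + s • v)) ⟪gradient f (x + t • v), v⟫ t := by
  have hline : HasDerivAt (fun s : ℝ => x + s • v) v t := by
    simpa using ((hasDerivAt_id t).smul_const v).const_add x
  exact hf.hasGradientAt.hasFDerivAt.comp_hasDerivAt t hline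

section LipschitzGradient

variable {E : Type*} [NormedAddCommGroup E] [InnerProductSpace ℝ E] [CompleteSpace E]
  {f : E → ℝ} {L : ℝ} (hf : Differentiable ℝ f)
  (hlip : ∀ x y, ‖gradient f x - gradient f y‖ ≤ L * ‖x - y‖)
include hf hlip

theorem le_add_inner_gradient_add_sq_of_lipschitz (x y : E) :
    f y ≤ f x + ⟪gradient f x, y - x⟫ + L / 2 * ‖y - x‖ ^ 2 := by
  set v := y - x
  set g : ℝ → ℝ := fun t => f (x + t • v) - t * ⟪gradient f x, v⟫ - L / 2 * t ^ 2 * ‖v‖ ^ 2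
  have hg : ∀ t, HasDerivAt g
      (⟪gradient f (x + t • v) - gradient f x, v⟫ - L * t * ‖v‖ ^ 2) t := by
    intro t
    refine (((hf _).hasDerivAt_comp_add_smul.sub
      ((hasDerivAt_id t).mul_const ⟪gradient f x, v⟫)).sub
      (((hasDerivAt_pow 2 t).const_mul (L / 2)).mul_const (‖v‖ ^ 2))).congr_deriv ?_
    rw [inner_sub_left]
    push_cast
    ring
  have hg_nonpos : ∀ t, 0 < t →
      ⟪gradient f (x + t • v) - gradient f x, v⟫ - L * t * ‖v‖ ^ 2 ≤ 0 := by
    intro t ht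
    rw [sub_nonpos]
    have hgrad : ‖gradient f (x + t • v) - gradient f x‖ ≤ L * t * ‖v‖ := by
      simpa [norm_smul, abs_of_pos ht, mul_assoc] using hlip (x + t • v) x
    calc ⟪gradient f (x + t • v) - gradient f x, v⟫
        ≤ ‖gradient f (x + t • v) - gradient f x‖ * ‖v‖ := real_inner_le_norm _ _
      _ ≤ L * t * ‖v‖ * ‖v‖ := by gcongr
      _ = L * t * ‖v‖ ^ 2 := by ring
  have hanti : AntitoneOn g (Set.Ici 0) :=
    antitoneOn_of_hasDerivWithinAt_nonpos (convex_Ici 0)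
      (fun t _ => (hg t).continuousAt.continuousWithinAt)
      (fun t _ => (hg t).hasDerivWithinAt)
      (fun t ht => hg_nonpos t (by simpa using ht))
  have h01 : g 1 ≤ g 0 := hanti (Set.mem_Ici.2 le_rfl) (Set.mem_Ici.2 zero_le_one) zero_le_one
  simp only [g, v, one_smul, add_sub_cancel, one_mul, one_pow, zero_smul, add_zero, zero_mul,
    zero_pow two_ne_zero, mul_zero, sub_zero] at h01
  linarith

theorem le_sub_sq_norm_gradient_of_lipschitz (x : E) (η : ℝ) :
    f (x - η • gradient f x) ≤ f x - η * (1 - L * η / 2) * ‖gradient f x‖ ^ 2 := by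
  have h := le_add_inner_gradient_add_sq_of_lipschitz hf hlip x (x - η • gradient f x)
  rw [sub_sub_cancel_left, inner_neg_right, real_inner_smul_right, real_inner_self_eq_norm_sq,
    norm_neg, norm_smul, Real.norm_eq_abs, mul_pow, sq_abs] at h
  linarith

theorem sum_sq_norm_gradient_le_of_gradient_descent (hL : 0 < L) (x : ℕ → E)
    (hiter : ∀ k, x (k + 1) = x k - (1 / L) • gradient f (x k)) (m : ℕ) :
    ∑ k ∈ range m, ‖gradient f (x k)‖ ^ 2 ≤ 2 * L * (f (x 0) - f (x m)) := by
  have hstep : ∀ k, ‖gradient f (x k)‖ ^ 2 ≤ 2 * L * (f (x k) - f (x (k + 1))) := by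
    intro k
    have h := le_sub_sq_norm_gradient_of_lipschitz hf hlip (x k) (1 / L)
    rw [← hiter k, mul_one_div_cancel hL.ne'] at h
    calc ‖gradient f (x k)‖ ^ 2 = 2 * L * (1 / L * (1 - 1 / 2) * ‖gradient f (x k)‖ ^ 2) := by
          field_simp; ring
      _ ≤ 2 * L * (f (x k) - f (x (k + 1))) := by gcongr; linarith
  calc ∑ k ∈ range m, ‖gradient f (x k)‖ ^ 2
      ≤ ∑ k ∈ range m, 2 * L * (f (x k) - f (x (k + 1))) := sum_le_sum fun k _ => hstep k
    _ = 2 * L * (f (x 0) - f (x m)) := by rw [← mul_sum, sum_range_sub' (fun k => f (x k))]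

end LipschitzGradient

/-- Convergence of gradient descent for a function with `L`-Lipschitz gradient
bounded below: with step size `1/L`, within `⌈2L(f(x₀) - f*)/ε²⌉` steps some
iterate has gradient of norm less than `ε`. -/
theorem gradient_descent_convergence
    {n : ℕ} (f : EuclideanSpace ℝ (Fin n) → ℝ) (hf : Differentiable ℝ f)
    (L : ℝ) (hL : 0 < L)
    (hlip : ∀ x y, ‖gradient f x - gradient f y‖ ≤ L * ‖x - y‖)
    (fstar : ℝ) (hbound : ∀ x, fstar ≤ f x)
    (x : ℕ → EuclideanSpace ℝ (Fin n))
    (hiter : ∀ k, x (k + 1) = x k - (1 / L) • gradient f (x k))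
    (ε : ℝ) (hε : 0 < ε) :
    ∃ t ≤ ⌈2 * L * (f (x 0) - fstar) / ε ^ 2⌉₊, ‖gradient f (x t)‖ < ε := by
  set N := ⌈2 * L * (f (x 0) - fstar) / ε ^ 2⌉₊
  by_contra! hfar
  have hN : 2 * L * (f (x 0) - fstar) ≤ N * ε ^ 2 :=
    (div_le_iff₀ (by positivity)).mp (Nat.le_ceil _)
  have hcontra : (N + 1) * ε ^ 2 ≤ N * ε ^ 2 :=
    calc (N + 1) * ε ^ 2
        ≤ ∑ k ∈ range (N + 1), ‖gradient f (x k)‖ ^ 2 := by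
          simpa using card_nsmul_le_sum (range (N + 1)) _ (ε ^ 2) fun k hk =>
            pow_le_pow_left₀ hε.le (hfar k (Nat.lt_succ_iff.mp (mem_range.mp hk))) 2
      _ ≤ 2 * L * (f (x 0) - f (x (N + 1))) :=
          sum_sq_norm_gradient_le_of_gradient_descent hf hlip hL x hiter (N + 1)
      _ ≤ 2 * L * (f (x 0) - fstar) := by gcongr; exact hbound _
      _ ≤ N * ε ^ 2 := hN
  linarith [pow_pos hε 2]
end
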